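/- Let V(gₑ) = (k₁/2)‖z‖² + (k₂/2)β² with z = (v_z, θₑ) ∈ ℝ³ and k₁, k₂ > 0. If ‖pₑ‖² + θₑ² ≤ ‖z‖² (which holds when ‖v_z‖ ≥ ‖pₑ‖), then V(gₑ) ≥ (k₁/8)‖[Ad_e] − [Ad_{gₑ}]‖², where ‖[Ad_e] − [Ad_{gₑ}]‖² ≤ 4(θₑ² + ‖pₑ‖²). -/
import Mathlib

open Matrix Finset

lemma one_sub_cos_le (θ : ℝ) : 1 - Real.cos θ ≤ θ ^ 2 / 2 := by
  have h1 : Real.cos (θ/2) ^ 2 = 1/2 + Real.cos (2*(θ/2)) / 2 := Real.cos_sq _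
  have h2 : Real.sin (θ/2) ^ 2 + Real.cos (θ/2) ^ 2 = 1 := Real.sin_sq_add_cos_sq _
  have h3 : Real.sin (θ/2) ^ 2 ≤ (θ/2) ^ 2 := Real.sin_sq_le_sq
  have : 2*(θ/2) = θ := by ring
  rw [this] at h1
  nlinarith

/-- the `SE(2)` Morse function
`V = (k₁/2)‖z‖² + (k₂/2)β²` dominates `(k₁/8)‖[Ad_e] - [Ad_{gₑ}]‖²_F`,
provided `‖pₑ‖² + θₑ² ≤ ‖z‖²`; moreover
`‖[Ad_e] - [Ad_{gₑ}]‖²_F ≤ 4(θₑ² + ‖pₑ‖²)`. -/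
theorem stmt_13 (k₁ k₂ : ℝ) (hk₁ : 0 < k₁) (hk₂ : 0 < k₂)
    (vzx vzy θ x y β : ℝ)
    (Ad : Matrix (Fin 3) (Fin 3) ℝ)
    (hAd : Ad = !![Real.cos θ, -Real.sin θ, y;
                   Real.sin θ, Real.cos θ, -x;
                   0, 0, 1])
    (normz2 : ℝ) (hz : normz2 = vzx ^ 2 + vzy ^ 2 + θ ^ 2)
    (hp : x ^ 2 + y ^ 2 + θ ^ 2 ≤ normz2)
    (AdSq : ℝ)
    (hAdSq : AdSq =
      ∑ i : Fin 3, ∑ j : Fin 3, ((1 : Matrix (Fin 3) (Fin 3) ℝ) - Ad) i j ^ 2) :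
    k₁ / 2 * normz2 + k₂ / 2 * β ^ 2 ≥ k₁ / 8 * AdSq ∧
    AdSq ≤ 4 * (θ ^ 2 + (x ^ 2 + y ^ 2)) := by
  have hA : AdSq = (1 - Real.cos θ)^2 + Real.sin θ ^ 2 + y^2
      + Real.sin θ ^ 2 + (1 - Real.cos θ)^2 + x^2 := by
    subst hAd hAdSq
    simp [Fin.sum_univ_three, Matrix.sub_apply, Matrix.one_apply]
    ring
  have h2 : Real.sin θ ^ 2 + Real.cos θ ^ 2 = 1 := Real.sin_sq_add_cos_sq _
  have h3 := one_sub_cos_le θ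
  have hβ : 0 ≤ β ^ 2 := sq_nonneg β
  constructor
  · nlinarith [sq_nonneg (1 - Real.cos θ), sq_nonneg θ, sq_nonneg x, sq_nonneg y,
      mul_nonneg hk₂.le hβ]
  · nlinarith
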